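/- Delayed dechirped chirp identity: for a delay k₁ with 0 ≤ k₁ < M and all k ∈ {0,…,M−1}, x_0*[k]·x_ā[k − k₁] = x_ā[M − k₁]·exp(2πi·k·(ā − k₁)/M), where x_ā is extended to negative arguments by the defining formula and M is even. -/

import Mathlib

/-!
Conjugating `x_0[k]` negates its phase, which is real. After that, the phases of the two sides
differ by the integer `k₁ - ā` (a rational-function identity in `k`, `k₁`, `ā` and `M`), so the
exponentials agree.
-/

open Complex

/-- The chirp of symbol `a` on `M` samples is `x_a[n] = exp (2πi · chirpPhase M a n)`. -/
noncomputable def chirpPhase (M a n : ℂ) : ℂ := n * (a / M - 1 / 2 + n / (2 * M))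

theorem chirpPhase_sub_sub_chirpPhase_zero {M : ℂ} (hM : M ≠ 0) (a k k₁ : ℂ) :
    chirpPhase M a (k - k₁) - chirpPhase M 0 k
      = chirpPhase M a (M - k₁) + k * (a - k₁) / M + (k₁ - a) := by
  unfold chirpPhase
  field_simp
  ring

theorem lora_delayed_dechirp_general (SF : ℕ) (abar : ℤ) (k₁ : ℤ) (k : ℤ) :
    (starRingEnd ℂ) (Complex.exp (2 * (Real.pi : ℂ) * Complex.I * (k : ℂ) *
        (-(1 / 2) + (k : ℂ) / (2 * ((2 ^ SF : ℕ) : ℂ)))))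
      * Complex.exp (2 * (Real.pi : ℂ) * Complex.I * ((k - k₁ : ℤ) : ℂ) *
        ((abar : ℂ) / ((2 ^ SF : ℕ) : ℂ) - 1 / 2 + ((k - k₁ : ℤ) : ℂ) / (2 * ((2 ^ SF : ℕ) : ℂ))))
    = Complex.exp (2 * (Real.pi : ℂ) * Complex.I * (((2 ^ SF : ℤ) - k₁ : ℤ) : ℂ) *
        ((abar : ℂ) / ((2 ^ SF : ℕ) : ℂ) - 1 / 2 + (((2 ^ SF : ℤ) - k₁ : ℤ) : ℂ) / (2 * ((2 ^ SF : ℕ) : ℂ))))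
      * Complex.exp (2 * (Real.pi : ℂ) * Complex.I * (k : ℂ) * ((abar - k₁ : ℤ) : ℂ) / ((2 ^ SF : ℕ) : ℂ)) := by
  have hphase := chirpPhase_sub_sub_chirpPhase_zero (pow_ne_zero SF two_ne_zero) abar k k₁
  unfold chirpPhase at hphase
  rw [← exp_conj, ← exp_add, ← exp_add, exp_eq_exp_iff_exists_int]
  refine ⟨k₁ - abar, ?_⟩
  push_cast
  simp only [map_mul, map_add, map_neg, map_div₀, map_pow, map_ofNat, map_one, conj_ofReal,
    conj_I, map_intCast]
  linear_combination (2 * (Real.pi : ℂ) * I) * hphase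

/-- Delayed dechirped chirp identity:
`conj (x_0[k]) * x_ā[k − k₁] = x_ā[M − k₁] · exp(2πi·k·(ā − k₁)/M)` for even `M = 2^SF`. -/
theorem lora_delayed_dechirp (SF : ℕ) (hSF : 1 ≤ SF) (abar : ℤ) (k₁ : ℤ)
    (hk₁0 : 0 ≤ k₁) (hk₁1 : k₁ < (2 ^ SF : ℤ)) (k : ℤ) (hk0 : 0 ≤ k)
    (hk1 : k ≤ (2 ^ SF : ℤ) - 1) :
    (starRingEnd ℂ) (Complex.exp (2 * (Real.pi : ℂ) * Complex.I * (k : ℂ) *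
        (-(1 / 2) + (k : ℂ) / (2 * ((2 ^ SF : ℕ) : ℂ)))))
      * Complex.exp (2 * (Real.pi : ℂ) * Complex.I * ((k - k₁ : ℤ) : ℂ) *
        ((abar : ℂ) / ((2 ^ SF : ℕ) : ℂ) - 1 / 2 + ((k - k₁ : ℤ) : ℂ) / (2 * ((2 ^ SF : ℕ) : ℂ))))
    = Complex.exp (2 * (Real.pi : ℂ) * Complex.I * (((2 ^ SF : ℤ) - k₁ : ℤ) : ℂ) *
        ((abar : ℂ) / ((2 ^ SF : ℕ) : ℂ) - 1 / 2 + (((2 ^ SF : ℤ) - k₁ : ℤ) : ℂ) / (2 * ((2 ^ SF : ℕ) : ℂ))))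
      * Complex.exp (2 * (Real.pi : ℂ) * Complex.I * (k : ℂ) * ((abar - k₁ : ℤ) : ℂ) / ((2 ^ SF : ℕ) : ℂ)) :=
  lora_delayed_dechirp_general SF abar k₁ k
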